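/- arXiv:1105.5778 — 2 statements merged into one kernel-verified Lean document; each statement's English description precedes it below -/
import Mathlib

section
/- Let a < b be real numbers, let f : [a,b] → ℝ be twice differentiable with a real constant m such that m ≤ f''(x) for all x ∈ [a,b], and let g : [a,b] → [0,1] be integrable and symmetric about (a+b)/2 (i.e. g(x) = g(a+b−x) for all x ∈ [a,b]). Then (b−a)·( (f(a)+f(b))/2 − (1/(b−a))∫_a^b f(t) dt − m(b−a)²/12 ) ≥ ((f(a)+f(b))/2)·∫_a^b g(t) dt − ∫_a^b f(t)g(t) dt − (m/2)·∫_a^b (t−a)(b−t)g(t) dt ≥ 0. -/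
/-!
Write `K t = (f a + f b)/2 - f t - (m/2)(t - a)(b - t)` (`trapezoidDefect`); the middle
expression of the claim is `∫ K g` and the left-hand one is `∫ K`. Since `f'' ≥ m`, the function
`f - (m/2) x²` is convex, and comparing it with its chord at the symmetric points `t` and
`a + b - t` gives `K t + K (a + b - t) ≥ 0`. As `g` is symmetric, `∫ K g` only sees the
symmetrization `(K t + K (a + b - t))/2`, which is nonnegative, so `0 ≤ ∫ K g ≤ ∫ K` from
`0 ≤ g ≤ 1`.
-/

open MeasureTheory intervalIntegral Set

theorem ConvexOn.add_apply_reflect_le {φ : ℝ → ℝ} {a b t : ℝ} (hφ : ConvexOn ℝ (Icc a b) φ)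
    (ht : t ∈ Icc a b) : φ t + φ (a + b - t) ≤ φ a + φ b := by
  obtain rfl | hab := (ht.1.trans ht.2).eq_or_lt
  · obtain rfl : t = a := le_antisymm ht.2 ht.1
    simp
  have hba : 0 < b - a := sub_pos.2 hab
  set θ := (t - a) / (b - a)
  have hθ0 : 0 ≤ θ := div_nonneg (by linarith [ht.1]) hba.le
  have hθ1 : 0 ≤ 1 - θ := by
    rw [sub_nonneg, div_le_one hba]
    linarith [ht.2]
  have ha : a ∈ Icc a b := left_mem_Icc.2 hab.le
  have hb : b ∈ Icc a b := right_mem_Icc.2 hab.le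
  have ht' : (1 - θ) • a + θ • b = t := by
    simp only [smul_eq_mul, θ]
    field_simp
    ring
  have hσ : θ • a + (1 - θ) • b = a + b - t := by
    simp only [smul_eq_mul, θ]
    field_simp
    ring
  have h₁ := hφ.2 ha hb hθ1 hθ0 (by ring)
  have h₂ := hφ.2 ha hb hθ0 hθ1 (by ring)
  rw [ht'] at h₁
  rw [hσ] at h₂
  simp only [smul_eq_mul] at h₁ h₂
  linarith

theorem convexOn_sub_half_mul_sq {D : Set ℝ} (hD : Convex ℝ D) {f f' f'' : ℝ → ℝ} {m : ℝ}
    (hf' : ∀ x ∈ D, HasDerivWithinAt f (f' x) D x)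
    (hf'' : ∀ x ∈ interior D, HasDerivWithinAt f' (f'' x) (interior D) x)
    (hm : ∀ x ∈ interior D, m ≤ f'' x) :
    ConvexOn ℝ D fun x => f x - m / 2 * x ^ 2 := by
  refine convexOn_of_hasDerivWithinAt2_nonneg hD (f' := fun x => f' x - m * x)
    (f'' := fun x => f'' x - m) ?_ (fun x hx => ?_) (fun x hx => ?_) (fun x hx => ?_)
  · exact ContinuousOn.sub (fun x hx => (hf' x hx).continuousWithinAt) (by fun_prop)
  · exact (((hf' x (interior_subset hx)).mono interior_subset).sub
      ((hasDerivAt_pow 2 x).const_mul (m / 2)).hasDerivWithinAt).congr_deriv (by push_cast; ring)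
  · exact ((hf'' x hx).sub ((hasDerivAt_id' x).const_mul m).hasDerivWithinAt).congr_deriv (by ring)
  · simpa using hm x hx

theorem integral_sub_mul_sub (a b : ℝ) : ∫ t in a..b, (t - a) * (b - t) = (b - a) ^ 3 / 6 := by
  have hP : Continuous fun t : ℝ => (t - a) * (b - t) := by fun_prop
  rw [integral_eq_sub_of_hasDerivAt (f := fun t => (b - a) * (t - a) ^ 2 / 2 - (t - a) ^ 3 / 3)
    (fun x _ => ?_) (hP.intervalIntegrable _ _)]
  · ring
  · exact (((((hasDerivAt_id x).sub_const a).pow 2).const_mul (b - a)).div_const 2).sub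
      ((((hasDerivAt_id x).sub_const a).pow 3).div_const 3) |>.congr_deriv (by simp; ring)

section Reflection

variable {a b : ℝ} {K g : ℝ → ℝ}

theorem integral_comp_reflect_mul_of_symm (hg : ∀ x ∈ uIcc a b, g x = g (a + b - x)) :
    ∫ t in a..b, K (a + b - t) * g t = ∫ t in a..b, K t * g t := by
  calc ∫ t in a..b, K (a + b - t) * g t = ∫ t in a..b, K (a + b - t) * g (a + b - t) :=
        integral_congr fun x hx => by simp only [← hg x hx]
    _ = ∫ t in a..b, K t * g t := by
        simpa using integral_comp_sub_left (a := a) (b := b) (fun t => K t * g t) (a + b)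

theorem integral_mul_eq_integral_symmetrization_mul
    (hKg : IntervalIntegrable (fun t => K t * g t) volume a b)
    (hKσg : IntervalIntegrable (fun t => K (a + b - t) * g t) volume a b)
    (hg : ∀ x ∈ uIcc a b, g x = g (a + b - x)) :
    ∫ t in a..b, K t * g t = ∫ t in a..b, (K t + K (a + b - t)) / 2 * g t := by
  have hsplit : ∀ t, (K t + K (a + b - t)) / 2 * g t = (K t * g t + K (a + b - t) * g t) / 2 :=
    fun t => by ring
  simp only [hsplit, intervalIntegral.integral_div, intervalIntegral.integral_add hKg hKσg,
    integral_comp_reflect_mul_of_symm hg]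
  ring

theorem integral_mul_mem_Icc_of_symm (hab : a ≤ b) (hK : ContinuousOn K (Icc a b))
    (hKσ : ∀ t ∈ Icc a b, 0 ≤ K t + K (a + b - t)) (hg : IntervalIntegrable g volume a b)
    (hg01 : ∀ x ∈ Icc a b, g x ∈ Icc (0 : ℝ) 1) (hgsymm : ∀ x ∈ Icc a b, g x = g (a + b - x)) :
    ∫ t in a..b, K t * g t ∈ Icc 0 (∫ t in a..b, K t) := by
  rw [← uIcc_of_le hab] at hK hgsymm
  have hKσ_cont : ContinuousOn (fun t => K (a + b - t)) (uIcc a b) :=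
    hK.comp (by fun_prop) fun t ht => by
      rw [uIcc_of_le hab] at ht ⊢
      exact ⟨by linarith [ht.2], by linarith [ht.1]⟩
  have hK_int : ∫ t in a..b, K t = ∫ t in a..b, (K t + K (a + b - t)) / 2 := by
    simpa using integral_mul_eq_integral_symmetrization_mul (g := fun _ => 1)
      (by simpa using hK.intervalIntegrable) (by simpa using hKσ_cont.intervalIntegrable)
      (fun _ _ => rfl)
  rw [integral_mul_eq_integral_symmetrization_mul (hg.continuousOn_mul hK)
    (hg.continuousOn_mul hKσ_cont) hgsymm, hK_int]
  have hS : ∀ t ∈ Icc a b, 0 ≤ (K t + K (a + b - t)) / 2 := fun t ht => by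
    linarith [hKσ t ht]
  refine ⟨integral_nonneg hab fun t ht => mul_nonneg (hS t ht) (hg01 t ht).1,
    integral_mono_on hab (hg.continuousOn_mul ((hK.add hKσ_cont).div_const 2))
      ((hK.add hKσ_cont).div_const 2).intervalIntegrable
      fun t ht => mul_le_of_le_one_right (hS t ht) (hg01 t ht).2⟩

end Reflection

noncomputable def trapezoidDefect (f : ℝ → ℝ) (m a b t : ℝ) : ℝ :=
  (f a + f b) / 2 - f t - m / 2 * ((t - a) * (b - t))

section TrapezoidDefect

variable {a b m : ℝ} {f : ℝ → ℝ}

theorem trapezoidDefect_add_reflect_nonneg {f' f'' : ℝ → ℝ}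
    (hf' : ∀ x ∈ Icc a b, HasDerivWithinAt f (f' x) (Icc a b) x)
    (hf'' : ∀ x ∈ Icc a b, HasDerivWithinAt f' (f'' x) (Icc a b) x)
    (hm : ∀ x ∈ Icc a b, m ≤ f'' x) {t : ℝ} (ht : t ∈ Icc a b) :
    0 ≤ trapezoidDefect f m a b t + trapezoidDefect f m a b (a + b - t) := by
  have := (convexOn_sub_half_mul_sq (convex_Icc a b) hf'
    (fun x hx => (hf'' x (interior_subset hx)).mono interior_subset)
    (fun x hx => hm x (interior_subset hx))).add_apply_reflect_le ht
  unfold trapezoidDefect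
  -- `a² + b² - t² - (a + b - t)² = 2 (t - a) (b - t)`
  linear_combination this

theorem integral_trapezoidDefect_mul {g : ℝ → ℝ} (hab : a ≤ b) (hf : ContinuousOn f (Icc a b))
    (hg : IntervalIntegrable g volume a b) :
    ∫ t in a..b, trapezoidDefect f m a b t * g t = (f a + f b) / 2 * (∫ t in a..b, g t)
      - (∫ t in a..b, f t * g t) - m / 2 * (∫ t in a..b, (t - a) * (b - t) * g t) := by
  rw [← uIcc_of_le hab] at hf
  have hexpand : ∀ t, trapezoidDefect f m a b t * g t
      = (f a + f b) / 2 * g t - f t * g t - m / 2 * ((t - a) * (b - t) * g t) :=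
    fun t => by unfold trapezoidDefect; ring
  simp only [hexpand]
  rw [intervalIntegral.integral_sub ((hg.const_mul _).sub (hg.continuousOn_mul hf))
      ((hg.continuousOn_mul (by fun_prop)).const_mul _),
    intervalIntegral.integral_sub (hg.const_mul _) (hg.continuousOn_mul hf),
    intervalIntegral.integral_const_mul, intervalIntegral.integral_const_mul]

theorem integral_trapezoidDefect (hab : a < b) (hf : ContinuousOn f (Icc a b)) :
    ∫ t in a..b, trapezoidDefect f m a b t = (b - a) * ((f a + f b) / 2
      - (1 / (b - a)) * (∫ t in a..b, f t) - m * (b - a) ^ 2 / 12) := by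
  unfold trapezoidDefect
  rw [intervalIntegral.integral_sub (intervalIntegrable_const.sub
      (hf.intervalIntegrable_of_Icc hab.le)) (((by fun_prop : Continuous fun t : ℝ =>
        (t - a) * (b - t)).intervalIntegrable _ _).const_mul _),
    intervalIntegral.integral_sub intervalIntegrable_const (hf.intervalIntegrable_of_Icc hab.le),
    intervalIntegral.integral_const, intervalIntegral.integral_const_mul, integral_sub_mul_sub]
  have hba : b - a ≠ 0 := (sub_pos.2 hab).ne'
  field_simp
  ring

end TrapezoidDefect

/-- Remark (estimate of precision in (1), lower-bound version): with `m ≤ f''` on `[a,b]`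
and `g : [a,b] → [0,1]` integrable and symmetric about `(a+b)/2`,
`(b−a)·((f(a)+f(b))/2 − (1/(b−a))∫f − m(b−a)²/12)
  ≥ ((f(a)+f(b))/2)·∫g − ∫f·g − (m/2)·∫(t−a)(b−t)g(t) ≥ 0`. -/
theorem fejer_stmt_4 (a b : ℝ) (hab : a < b) (f f' f'' g : ℝ → ℝ) (m : ℝ)
    (hf' : ∀ x ∈ Set.Icc a b, HasDerivWithinAt f (f' x) (Set.Icc a b) x)
    (hf'' : ∀ x ∈ Set.Icc a b, HasDerivWithinAt f' (f'' x) (Set.Icc a b) x)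
    (hm : ∀ x ∈ Set.Icc a b, m ≤ f'' x)
    (hg : IntervalIntegrable g volume a b)
    (hg01 : ∀ x ∈ Set.Icc a b, g x ∈ Set.Icc (0 : ℝ) 1)
    (hgsymm : ∀ x ∈ Set.Icc a b, g x = g (a + b - x)) :
    (f a + f b) / 2 * (∫ t in a..b, g t) - (∫ t in a..b, f t * g t)
        - m / 2 * (∫ t in a..b, (t - a) * (b - t) * g t)
      ≤ (b - a) * ((f a + f b) / 2 - (1 / (b - a)) * (∫ t in a..b, f t)
          - m * (b - a) ^ 2 / 12) ∧
    0 ≤ (f a + f b) / 2 * (∫ t in a..b, g t) - (∫ t in a..b, f t * g t)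
        - m / 2 * (∫ t in a..b, (t - a) * (b - t) * g t) := by
  have hf : ContinuousOn f (Icc a b) := fun x hx => (hf' x hx).continuousWithinAt
  obtain ⟨h₀, h₁⟩ := integral_mul_mem_Icc_of_symm hab.le (K := trapezoidDefect f m a b)
    (by unfold trapezoidDefect; fun_prop)
    (fun t ht => trapezoidDefect_add_reflect_nonneg hf' hf'' hm ht) hg hg01 hgsymm
  rw [integral_trapezoidDefect_mul hab.le hf hg] at h₀ h₁
  rw [integral_trapezoidDefect hab hf] at h₁
  exact ⟨h₁, h₀⟩
end

section
/- Let a < b be real numbers and let f : [a,b] → ℝ be twice differentiable, with real constants m and M such that m ≤ f''(x) ≤ M for all x ∈ [a,b]. Then m(b−a)²/96 ≤ (1/(b−a))·∫_a^b f(t) dt − (1/2)·( f((3a+b)/4) + f((a+3b)/4) ) ≤ M(b−a)²/96. -/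
/-!
Since `f'' ≥ m`, the function `g x = f x - m / 2 * x ^ 2` is convex. By the Hermite–Hadamard
inequality on the two halves of `[a, b]`, the quarter points `(3a+b)/4`, `(a+3b)/4` (the midpoints
of the halves) give a rule that underestimates `∫ g`; for the quadratic `m / 2 * x ^ 2` the rule is
off by exactly `m (b - a)³ / 96`, which yields the lower bound. The upper bound is the lower bound
for `-f`.
-/

open MeasureTheory intervalIntegral Set

theorem ConvexOn.map_midpoint_mul_le_intervalIntegral {u v : ℝ} (huv : u ≤ v) {g : ℝ → ℝ}
    (hg : ConvexOn ℝ (Icc u v) g) (hgc : ContinuousOn g (Icc u v)) :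
    g ((u + v) / 2) * (v - u) ≤ ∫ t in u..v, g t := by
  have hreflect_mem : ∀ t ∈ Icc u v, u + v - t ∈ Icc u v := fun t ht =>
    ⟨by linarith [ht.2], by linarith [ht.1]⟩
  have hgi : IntervalIntegrable g volume u v := hgc.intervalIntegrable_of_Icc huv
  have hgi' : IntervalIntegrable (fun t => g (u + v - t)) volume u v :=
    (hgc.comp (by fun_prop) hreflect_mem).intervalIntegrable_of_Icc huv
  have hreflect : ∫ t in u..v, g (u + v - t) = ∫ t in u..v, g t := by
    rw [integral_comp_sub_left]; congr 1 <;> ring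
  -- Pair `t` with its mirror image `u + v - t`: their average is the midpoint.
  have hmid : ∀ t ∈ Icc u v, g ((u + v) / 2) ≤ (g t + g (u + v - t)) / 2 := fun t ht => by
    have := hg.2 ht (hreflect_mem t ht) (by norm_num : (0 : ℝ) ≤ 1 / 2)
      (by norm_num : (0 : ℝ) ≤ 1 / 2) (by norm_num)
    simp only [smul_eq_mul] at this
    rw [show 1 / 2 * t + 1 / 2 * (u + v - t) = (u + v) / 2 by ring] at this
    linarith
  calc g ((u + v) / 2) * (v - u) = ∫ _ in u..v, g ((u + v) / 2) := by simp [mul_comm]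
    _ ≤ ∫ t in u..v, (g t + g (u + v - t)) / 2 :=
      integral_mono_on huv intervalIntegrable_const ((hgi.add hgi').div_const 2) hmid
    _ = ∫ t in u..v, g t := by
      rw [intervalIntegral.integral_div, intervalIntegral.integral_add hgi hgi', hreflect]; ring

theorem ConvexOn.quarterPoints_mul_le_intervalIntegral {a b : ℝ} (hab : a ≤ b) {g : ℝ → ℝ}
    (hg : ConvexOn ℝ (Icc a b) g) (hgc : ContinuousOn g (Icc a b)) :
    (g ((3 * a + b) / 4) + g ((a + 3 * b) / 4)) * ((b - a) / 2) ≤ ∫ t in a..b, g t := by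
  set c := (a + b) / 2 with hc
  have hac : a ≤ c := by linarith
  have hcb : c ≤ b := by linarith
  have hleft : Icc a c ⊆ Icc a b := Icc_subset_Icc_right hcb
  have hright : Icc c b ⊆ Icc a b := Icc_subset_Icc_left hac
  have h₁ := map_midpoint_mul_le_intervalIntegral hac
    (hg.subset hleft (convex_Icc a c)) (hgc.mono hleft)
  have h₂ := map_midpoint_mul_le_intervalIntegral hcb
    (hg.subset hright (convex_Icc c b)) (hgc.mono hright)
  rw [← integral_add_adjacent_intervals ((hgc.mono hleft).intervalIntegrable_of_Icc hac)
    ((hgc.mono hright).intervalIntegrable_of_Icc hcb)]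
  rw [show (a + c) / 2 = (3 * a + b) / 4 by ring, show c - a = (b - a) / 2 by ring] at h₁
  rw [show (c + b) / 2 = (a + 3 * b) / 4 by ring, show b - c = (b - a) / 2 by ring] at h₂
  linarith

theorem convexOn_sub_mul_sq_of_le_deriv2 {D : Set ℝ} (hD : Convex ℝ D) {f f' f'' : ℝ → ℝ} {m : ℝ}
    (hf' : ∀ x ∈ D, HasDerivWithinAt f (f' x) D x)
    (hf'' : ∀ x ∈ D, HasDerivWithinAt f' (f'' x) D x)
    (hm : ∀ x ∈ D, m ≤ f'' x) :
    ConvexOn ℝ D (fun x => f x - m / 2 * x ^ 2) := by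
  have hq' : ∀ x, HasDerivAt (fun x : ℝ => m / 2 * x ^ 2) (m * x) x := fun x =>
    ((hasDerivAt_pow 2 x).const_mul (m / 2)).congr_deriv (by ring)
  refine convexOn_of_hasDerivWithinAt2_nonneg hD
    (fun x hx => ((hf' x hx).continuousWithinAt).sub (by fun_prop)) (f' := fun x => f' x - m * x)
    (f'' := fun x => f'' x - m) (fun x hx => ?_) (fun x hx => ?_) (fun x hx => ?_)
  · exact ((hf' x (interior_subset hx)).mono interior_subset).sub (hq' x).hasDerivWithinAt
  · exact ((hf'' x (interior_subset hx)).mono interior_subset).sub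
      (hasDerivAt_const_mul m).hasDerivWithinAt
  · exact sub_nonneg.2 (hm x (interior_subset hx))

noncomputable def quarterPointError (f : ℝ → ℝ) (a b : ℝ) : ℝ :=
  (1 / (b - a)) * (∫ t in a..b, f t) - (1 / 2) * (f ((3 * a + b) / 4) + f ((a + 3 * b) / 4))

theorem quarterPointError_neg (f : ℝ → ℝ) (a b : ℝ) :
    quarterPointError (-f) a b = -quarterPointError f a b := by
  simp only [quarterPointError, Pi.neg_apply, intervalIntegral.integral_neg]
  ring

theorem mul_sq_div_le_quarterPointError {a b : ℝ} (hab : a < b) {f f' f'' : ℝ → ℝ} {m : ℝ}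
    (hf' : ∀ x ∈ Icc a b, HasDerivWithinAt f (f' x) (Icc a b) x)
    (hf'' : ∀ x ∈ Icc a b, HasDerivWithinAt f' (f'' x) (Icc a b) x)
    (hm : ∀ x ∈ Icc a b, m ≤ f'' x) :
    m * (b - a) ^ 2 / 96 ≤ quarterPointError f a b := by
  have hfc : ContinuousOn f (Icc a b) := fun x hx => (hf' x hx).continuousWithinAt
  have hconvex := convexOn_sub_mul_sq_of_le_deriv2 (convex_Icc a b) hf' hf'' hm
  have hrule := hconvex.quarterPoints_mul_le_intervalIntegral hab.le (hfc.sub (by fun_prop))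
  rw [intervalIntegral.integral_sub (hfc.intervalIntegrable_of_Icc hab.le)
    ((intervalIntegrable_pow 2).const_mul _),
    intervalIntegral.integral_const_mul, integral_pow] at hrule
  have hba : 0 < b - a := sub_pos.2 hab
  have key : m * (b - a) ^ 3 / 96
      ≤ (∫ t in a..b, f t) - (b - a) / 2 * (f ((3 * a + b) / 4) + f ((a + 3 * b) / 4)) := by
    linarith
  calc m * (b - a) ^ 2 / 96 = m * (b - a) ^ 3 / 96 / (b - a) := by field_simp
    _ ≤ ((∫ t in a..b, f t) - (b - a) / 2 * (f ((3 * a + b) / 4) + f ((a + 3 * b) / 4)))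
        / (b - a) := div_le_div_of_nonneg_right key hba.le
    _ = quarterPointError f a b := by unfold quarterPointError; field_simp

/-- Remark: for twice differentiable `f` with `m ≤ f'' ≤ M` on `[a,b]`,
`m(b−a)²/96 ≤ (1/(b−a))·∫_a^b f − (1/2)·(f((3a+b)/4) + f((a+3b)/4)) ≤ M(b−a)²/96`. -/
theorem fejer_stmt_7 (a b : ℝ) (hab : a < b) (f f' f'' : ℝ → ℝ) (m M : ℝ)
    (hf' : ∀ x ∈ Set.Icc a b, HasDerivWithinAt f (f' x) (Set.Icc a b) x)
    (hf'' : ∀ x ∈ Set.Icc a b, HasDerivWithinAt f' (f'' x) (Set.Icc a b) x)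
    (hm : ∀ x ∈ Set.Icc a b, m ≤ f'' x)
    (hM : ∀ x ∈ Set.Icc a b, f'' x ≤ M) :
    m * (b - a) ^ 2 / 96
        ≤ (1 / (b - a)) * (∫ t in a..b, f t)
            - (1 / 2) * (f ((3 * a + b) / 4) + f ((a + 3 * b) / 4)) ∧
    (1 / (b - a)) * (∫ t in a..b, f t)
        - (1 / 2) * (f ((3 * a + b) / 4) + f ((a + 3 * b) / 4))
        ≤ M * (b - a) ^ 2 / 96 := by
  have hupper := mul_sq_div_le_quarterPointError hab (fun x hx => (hf' x hx).neg)
    (fun x hx => (hf'' x hx).neg) (fun x hx => neg_le_neg (hM x hx))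
  rw [quarterPointError_neg, neg_mul, neg_div, neg_le_neg_iff] at hupper
  exact ⟨mul_sq_div_le_quarterPointError hab hf' hf'' hm, hupper⟩
end
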